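/- arXiv:1607.02482 — 13 statements merged into one kernel-verified Lean document; each statement's English description precedes it below -/
import Mathlib

section
/- Let (R, m) be a Noetherian local ring with finite residue field of cardinality q, and let c₁, ..., c_q be a set of representatives of the residue classes of m. Then the set of polynomials in R[x] mapping R into m equals the ideal generated by π(x) = ∏ᵢ(x - cᵢ) and the constants in m, i.e., Z(R, m) = (π(x)) + m·R[x]. -/
open Polynomial IsLocalRing

/-- The ideal of polynomials in `R[X]` mapping every element of `S` into the ideal `I`. -/
def zeroFunctionsInto {R : Type*} [CommRing R] (S : Set R) (I : Ideal R) : Ideal R[X] where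
  carrier := {f | ∀ s ∈ S, f.eval s ∈ I}
  add_mem' := fun hf hg s hs => by simpa using I.add_mem (hf s hs) (hg s hs)
  zero_mem' := fun s _ => by simp
  smul_mem' := fun c f hf s hs => by simpa using I.mul_mem_left (c.eval s) (hf s hs)

/-- The ideal of polynomials vanishing on the subset `S`. -/
def zeroFunctions {R : Type*} [CommRing R] (S : Set R) : Ideal R[X] :=
  zeroFunctionsInto S ⊥

/-!
Reducing modulo a maximal ideal `I`, a polynomial `f` maps `R` into `I` exactly when its image
in `(R ⧸ I)[X]` vanishes at every element of the field `R ⧸ I`, i.e. at the distinct points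
`c̄ᵢ`, i.e. when `π̄ ∣ f̄`. Lifting the cofactor, `f - π g` reduces to zero, so it lies in
`I · R[X]`, the kernel of reduction.
-/

section

variable {R : Type*} [CommRing R] {ι : Type*} [Fintype ι]

lemma map_C_le_zeroFunctionsInto (S : Set R) (I : Ideal R) :
    I.map (C : R →+* R[X]) ≤ zeroFunctionsInto S I := by
  rw [Ideal.map_le_iff_le_comap]
  intro a ha s _
  simpa using ha

lemma prod_X_sub_C_mem_zeroFunctionsInto {I : Ideal R} {c : ι → R}
    (hc : Function.Surjective fun i => Ideal.Quotient.mk I (c i)) :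
    ∏ i, (X - C (c i)) ∈ zeroFunctionsInto Set.univ I := by
  intro s _
  obtain ⟨i, hi⟩ := hc (Ideal.Quotient.mk I s)
  rw [eval_prod]
  exact Ideal.prod_mem I (Finset.mem_univ i) (by simpa using Ideal.Quotient.eq.mp hi.symm)

lemma mem_span_prod_X_sub_C_sup_map_C {I : Ideal R} [I.IsMaximal] {c : ι → R}
    (hc : Function.Injective fun i => Ideal.Quotient.mk I (c i)) {f : R[X]}
    (hf : ∀ i, f.eval (c i) ∈ I) :
    f ∈ Ideal.span {∏ i, (X - C (c i))} ⊔ I.map (C : R →+* R[X]) := by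
  let := Ideal.Quotient.field I
  set π : R[X] := ∏ i, (X - C (c i))
  have hdvd : π.map (Ideal.Quotient.mk I) ∣ f.map (Ideal.Quotient.mk I) := by
    rw [Polynomial.map_prod]
    refine Fintype.prod_dvd_of_coprime ?_ fun i => ?_
    · simpa using pairwise_coprime_X_sub_C hc
    · simpa [dvd_iff_isRoot, eval_map, eval₂_at_apply, Ideal.Quotient.eq_zero_iff_mem] using hf i
  obtain ⟨g, hg⟩ := hdvd
  obtain ⟨g, rfl⟩ := map_surjective _ Ideal.Quotient.mk_surjective g
  have hrem : f - π * g ∈ I.map (C : R →+* R[X]) := by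
    rw [← Ideal.mk_ker (I := I), ← ker_mapRingHom, RingHom.mem_ker]
    simp [hg]
  rw [← add_sub_cancel (π * g) f]
  exact Ideal.add_mem _
    (Ideal.mem_sup_left (Ideal.mul_mem_right _ _ (Ideal.mem_span_singleton_self π)))
    (Ideal.mem_sup_right hrem)

theorem zeroFunctionsInto_univ_eq_span_prod_X_sub_C_sup_map_C {I : Ideal R} [I.IsMaximal]
    {c : ι → R} (hc : Function.Bijective fun i => Ideal.Quotient.mk I (c i)) :
    zeroFunctionsInto Set.univ I =
      Ideal.span {∏ i, (X - C (c i))} ⊔ I.map (C : R →+* R[X]) :=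
  le_antisymm (fun _ hf => mem_span_prod_X_sub_C_sup_map_C hc.1 fun _ => hf _ trivial) <|
    sup_le (Ideal.span_le.mpr <| Set.singleton_subset_iff.mpr <|
        prod_X_sub_C_mem_zeroFunctionsInto hc.2)
      (map_C_le_zeroFunctionsInto _ _)

end

theorem statement_1_general {R : Type*} [CommRing R] [IsLocalRing R]
    (q : ℕ) (c : Fin q → R) (hc : Function.Bijective (fun i => residue R (c i))) :
    zeroFunctionsInto (Set.univ : Set R) (maximalIdeal R) =
      Ideal.span {∏ i, (X - C (c i))} ⊔ (maximalIdeal R).map (C : R →+* R[X]) :=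
  zeroFunctionsInto_univ_eq_span_prod_X_sub_C_sup_map_C hc

theorem statement_1 {R : Type*} [CommRing R] [IsNoetherianRing R] [IsLocalRing R]
    (q : ℕ) (c : Fin q → R) (hc : Function.Bijective (fun i => residue R (c i))) :
    zeroFunctionsInto (Set.univ : Set R) (maximalIdeal R) =
      Ideal.span {∏ i, (X - C (c i))} ⊔ (maximalIdeal R).map (C : R →+* R[X]) :=
  statement_1_general q c hc
end

section
/- Let (R, m) be a Noetherian local ring with finite residue field of cardinality q. Then the ideal Z(R) of polynomials inducing the zero function on R equals the intersection, over all π-polynomials π(x), of the principal ideals (π(x)). -/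
open Polynomial IsLocalRing

lemma mem_zeroFunctions_univ {R : Type*} [CommRing R] {f : R[X]} :
    f ∈ zeroFunctions (Set.univ : Set R) ↔ ∀ r : R, f.eval r = 0 := by
  constructor
  · intro h r
    simpa using h r (Set.mem_univ r)
  · intro h r _
    simpa using h r

lemma prod_dvd_of_roots {R : Type*} [CommRing R] {n : ℕ} (c : Fin n → R)
    (hu : ∀ i j, i ≠ j → IsUnit (c i - c j)) (f : R[X]) (hf : ∀ i, f.eval (c i) = 0)
    (s : Finset (Fin n)) : (∏ i ∈ s, (X - C (c i))) ∣ f := by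
  induction s using Finset.induction_on with
  | empty => simp
  | @insert j s' hj ih =>
    obtain ⟨g, hg⟩ := ih
    have hgj : g.eval (c j) = 0 := by
      have := hf j
      rw [hg, eval_mul, eval_prod] at this
      have hunit : IsUnit (∏ i ∈ s', (c j - c i)) := by
        exact Finset.prod_induction _ IsUnit (fun a b => IsUnit.mul) isUnit_one
          (fun i hi => hu j i (fun h => hj (h ▸ hi)))
      simp only [eval_sub, eval_X, eval_C] at this
      exact (hunit.mul_right_eq_zero).mp this
    obtain ⟨k, hk⟩ := (dvd_iff_isRoot).mpr hgj
    rw [Finset.prod_insert hj]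
    exact ⟨k, by rw [hg, hk]; ring⟩

theorem statement_2 {R : Type*} [CommRing R] [IsNoetherianRing R] [IsLocalRing R]
    (q : ℕ) [Finite (ResidueField R)] (hq : Nat.card (ResidueField R) = q) :
    zeroFunctions (Set.univ : Set R) =
      ⨅ (c : Fin q → R) (_ : Function.Bijective (fun i => residue R (c i))),
        Ideal.span {∏ i, (X - C (c i))} := by
  haveI : Fintype (ResidueField R) := Fintype.ofFinite _
  apply le_antisymm
  · refine le_iInf fun c => le_iInf fun hc => ?_
    intro f hf
    rw [Ideal.mem_span_singleton]
    apply prod_dvd_of_roots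
    · intro i j hij
      have hres : residue R (c i) - residue R (c j) ≠ 0 := by
        intro h
        exact hij (hc.injective (by simpa [sub_eq_zero] using h))
      have : c i - c j ∉ maximalIdeal R := by
        intro h
        apply hres
        rw [← map_sub]
        exact (Ideal.Quotient.eq_zero_iff_mem).mpr h
      simpa [IsLocalRing.mem_maximalIdeal, mem_nonunits_iff, not_not] using this
    · intro i
      exact mem_zeroFunctions_univ.mp hf (c i)
  · intro f hf
    rw [mem_zeroFunctions_univ]
    intro r
    classical
    have hcard : Fintype.card (ResidueField R) = q := by
      rw [← Nat.card_eq_fintype_card, hq]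
    let e : Fin q ≃ ResidueField R := (Fintype.equivFinOfCardEq hcard).symm
    set c : Fin q → R := fun i =>
      if e i = residue R r then r else Function.surjInv (residue_surjective (R := R)) (e i) with hcdef
    have hres : ∀ i, residue R (c i) = e i := by
      intro i
      by_cases h : e i = residue R r
      · simp [hcdef, h]
      · simp [hcdef, h, Function.surjInv_eq]
    have hbij : Function.Bijective (fun i => residue R (c i)) := by
      have : (fun i => residue R (c i)) = e := funext hres
      rw [this]
      exact e.bijective
    have hmem : f ∈ Ideal.span {∏ i, (X - C (c i))} := by
      have h1 := Ideal.mem_iInf.mp hf c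
      exact Ideal.mem_iInf.mp h1 hbij
    obtain ⟨g, hg⟩ := Ideal.mem_span_singleton.mp hmem
    rw [hg, eval_mul, eval_prod]
    have : ∏ i, (r - c i) = 0 := by
      apply Finset.prod_eq_zero (Finset.mem_univ (e.symm (residue R r)))
      have : c (e.symm (residue R r)) = r := by
        simp [hcdef]
      rw [this, sub_self]
    simp only [eval_sub, eval_X, eval_C]
    rw [this, zero_mul]
end

section
/- Let (R, m) be a finite local ring with residue field of cardinality q, and let c₁, ..., c_q be representatives of the residue classes of m. Then Z(R) = ⋂_{i=1}^{q} Z(cᵢ + m), where Z(cᵢ + m) is the ideal of polynomials vanishing on the coset cᵢ + m; moreover each Z(cᵢ + m) is primary with associated prime the maximal ideal (x - cᵢ) + m·R[x] of R[x]. -/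
/-!
Every `r : R` lies in the coset `cᵢ + m` of its residue class, so vanishing on `R` means
vanishing on every coset. Let `Mᵢ` be the kernel of `f ↦ f(cᵢ) mod m`, a maximal ideal equal to
`(X - cᵢ) + m R[X]`. A polynomial in `Mᵢ` sends all of `cᵢ + m` into `m`, because
`s - cᵢ ∣ f(s) - f(cᵢ)`; hence `Mᵢ ^ n` sends it into `m ^ n = 0`, where `n` is the nilpotency
index of `m` in the finite, hence Artinian, local ring `R`. So `Mᵢ ^ n ≤ Z(cᵢ + m) ≤ Mᵢ`, and an
ideal squeezed between a power of a maximal ideal and that maximal ideal is primary with radical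
the maximal ideal.
-/

open Polynomial IsLocalRing

namespace Ideal

theorem isPrimary_and_radical_eq_of_pow_le_of_le {A : Type*} [CommRing A] {M J : Ideal A}
    (hM : M.IsMaximal) {n : ℕ} (hpow : M ^ n ≤ J) (hle : J ≤ M) :
    J.IsPrimary ∧ J.radical = M := by
  have hrad : J.radical = M :=
    le_antisymm (hM.isPrime.radical ▸ radical_mono hle)
      fun x hx => ⟨n, hpow (pow_mem_pow hx n)⟩
  exact ⟨isPrimary_of_isMaximal_radical (hrad ▸ hM), hrad⟩

end Ideal

section ZeroFunctions

variable {R : Type*} [CommRing R]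

theorem mem_zeroFunctionsInto {S : Set R} {I : Ideal R} {f : R[X]} :
    f ∈ zeroFunctionsInto S I ↔ ∀ s ∈ S, f.eval s ∈ I := Iff.rfl

theorem mem_zeroFunctions {S : Set R} {f : R[X]} :
    f ∈ zeroFunctions S ↔ ∀ s ∈ S, f.eval s = 0 := by
  simp [zeroFunctions, mem_zeroFunctionsInto]

theorem zeroFunctions_iUnion {ι : Sort*} (S : ι → Set R) :
    zeroFunctions (⋃ i, S i) = ⨅ i, zeroFunctions (S i) := by
  ext f
  simp only [mem_zeroFunctions, Ideal.mem_iInf, Set.mem_iUnion]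
  exact ⟨fun h i s hs => h s ⟨i, hs⟩, fun h s ⟨i, hs⟩ => h i s hs⟩

theorem zeroFunctionsInto_mul_le (S : Set R) (I J : Ideal R) :
    zeroFunctionsInto S I * zeroFunctionsInto S J ≤ zeroFunctionsInto S (I * J) :=
  Ideal.mul_le.mpr fun f hf g hg s hs => by
    simpa only [eval_mul] using Ideal.mul_mem_mul (hf s hs) (hg s hs)

theorem zeroFunctionsInto_pow_le (S : Set R) (I : Ideal R) (k : ℕ) :
    zeroFunctionsInto S I ^ k ≤ zeroFunctionsInto S (I ^ k) := by
  induction k with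
  | zero => exact fun f _ s _ => by simp
  | succ k ih =>
    rw [pow_succ, pow_succ]
    exact (Ideal.mul_mono_left ih).trans (zeroFunctionsInto_mul_le S _ _)

theorem comap_evalRingHom_eq_span_sup_map (c : R) (I : Ideal R) :
    I.comap (evalRingHom c) = Ideal.span {X - C c} ⊔ I.map (C : R →+* R[X]) := by
  have hI : (I.map (C : R →+* R[X])).map (evalRingHom c) = I := by
    rw [Ideal.map_map]
    convert I.map_id
    ext r
    simp
  conv_lhs => rw [← hI]
  rw [Ideal.comap_map_of_surjective _ (eval_surjective c), ← RingHom.ker_eq_comap_bot,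
    ker_evalRingHom, sup_comm]

theorem comap_evalRingHom_le_zeroFunctionsInto (c : R) (I : Ideal R) :
    I.comap (evalRingHom c) ≤ zeroFunctionsInto {r | r - c ∈ I} I := fun f hf s hs => by
  obtain ⟨d, hd⟩ := sub_dvd_eval_sub s c f
  simpa [sub_eq_iff_eq_add.mp hd] using I.add_mem (I.mul_mem_right d hs) hf

end ZeroFunctions

theorem statement_3 {R : Type*} [CommRing R] [Finite R] [IsLocalRing R]
    (q : ℕ) (c : Fin q → R) (hc : Function.Bijective (fun i => residue R (c i))) :
    (zeroFunctions (Set.univ : Set R) =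
        ⨅ i, zeroFunctions {r : R | r - c i ∈ maximalIdeal R}) ∧
      ∀ i, (zeroFunctions {r : R | r - c i ∈ maximalIdeal R}).IsPrimary ∧
        (zeroFunctions {r : R | r - c i ∈ maximalIdeal R}).radical =
          Ideal.span {X - C (c i)} ⊔ (maximalIdeal R).map (C : R →+* R[X]) := by
  have hcover : (Set.univ : Set R) = ⋃ i, {r : R | r - c i ∈ maximalIdeal R} := by
    refine (Set.eq_univ_of_forall fun r => Set.mem_iUnion.mpr ?_).symm
    obtain ⟨i, hi⟩ := hc.2 (residue R r)
    exact ⟨i, (residue_eq_zero_iff _).mp (by rw [map_sub]; exact sub_eq_zero.mpr hi.symm)⟩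
  obtain ⟨n, hn⟩ : IsNilpotent (maximalIdeal R) :=
    (isArtinianRing_iff_isNilpotent_maximalIdeal R).mp inferInstance
  refine ⟨hcover ▸ zeroFunctions_iUnion _, fun i => ?_⟩
  rw [← comap_evalRingHom_eq_span_sup_map]
  have hmax := Ideal.comap_isMaximal_of_surjective (evalRingHom (c i)) (eval_surjective (c i))
    (K := maximalIdeal R)
  refine Ideal.isPrimary_and_radical_eq_of_pow_le_of_le hmax (n := n) ?_ ?_
  · calc _ ≤ zeroFunctionsInto _ (maximalIdeal R) ^ n :=
          Ideal.pow_right_mono (comap_evalRingHom_le_zeroFunctionsInto _ _) n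
      _ ≤ _ := (zeroFunctionsInto_pow_le _ _ n).trans_eq (by rw [hn]; rfl)
  · intro f hf
    simp [(mem_zeroFunctions.mp hf) (c i) (by simp)]
end

section
/- Let (R, m) be a finite local ring with residue field of cardinality q and index of nilpotency e of m, and let c₁,...,c_q be coset representatives. For each j, the polynomial h(x) = ∏_{i≠j}(x - cᵢ)^e vanishes on every coset cᵢ + m with i ≠ j, but h(c_j) ≠ 0; hence the primary decomposition Z(R) = ⋂ᵢ Z(cᵢ + m) is minimal (irredundant). -/
open Polynomial IsLocalRing

theorem statement_4 {R : Type*} [CommRing R] [Finite R] [IsLocalRing R]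
    (q : ℕ) (c : Fin q → R) (hc : Function.Bijective (fun i => residue R (c i)))
    (e : ℕ) (he : 1 ≤ e) (hnil : maximalIdeal R ^ e = ⊥) (hnil' : maximalIdeal R ^ (e - 1) ≠ ⊥)
    (j : Fin q) :
    (∀ i, i ≠ j → ∀ r : R, r - c i ∈ maximalIdeal R →
        (∏ i ∈ Finset.univ.erase j, (X - C (c i)) ^ e).eval r = 0) ∧
      (∏ i ∈ Finset.univ.erase j, (X - C (c i)) ^ e).eval (c j) ≠ 0 ∧
      zeroFunctions (Set.univ : Set R) <
        ⨅ i ∈ Finset.univ.erase j, zeroFunctions {r : R | r - c i ∈ maximalIdeal R} := by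
  have hvanish : ∀ i ∈ Finset.univ.erase j, ∀ r : R, r - c i ∈ maximalIdeal R →
      (∏ i ∈ Finset.univ.erase j, (X - C (c i)) ^ e).eval r = 0 := by
    intro i hi r hr
    rw [eval_prod]
    apply Finset.prod_eq_zero hi
    rw [eval_pow, eval_sub, eval_X, eval_C]
    have h1 : (r - c i) ^ e ∈ maximalIdeal R ^ e := Ideal.pow_mem_pow hr e
    rwa [hnil, Ideal.mem_bot] at h1
  have hne : (∏ i ∈ Finset.univ.erase j, (X - C (c i)) ^ e).eval (c j) ≠ 0 := by
    rw [eval_prod]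
    have hu : ∀ i ∈ Finset.univ.erase j, IsUnit (((X - C (c i)) ^ e).eval (c j)) := by
      intro i hi
      rw [eval_pow, eval_sub, eval_X, eval_C]
      apply IsUnit.pow
      by_contra hnu
      have hm : c j - c i ∈ maximalIdeal R := hnu
      have : residue R (c j) = residue R (c i) := Ideal.Quotient.eq.mpr hm
      exact (Finset.mem_erase.mp hi).1 (hc.1 this).symm
    exact (Finset.prod_induction _ IsUnit (fun a b ha hb => ha.mul hb) isUnit_one hu).ne_zero
  refine ⟨fun i hi r hr => hvanish i (Finset.mem_erase.mpr ⟨hi, Finset.mem_univ i⟩) r hr,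
    hne, ?_⟩
  rw [SetLike.lt_iff_le_and_exists]
  constructor
  · refine le_iInf fun i => le_iInf fun hi => fun f hf s hs => hf s trivial
  · refine ⟨∏ i ∈ Finset.univ.erase j, (X - C (c i)) ^ e, ?_, ?_⟩
    · simp only [Ideal.mem_iInf]
      intro i hi r hr
      rw [Ideal.mem_bot]
      exact hvanish i hi r hr
    · intro hf
      exact hne (Ideal.mem_bot.mp (hf (c j) trivial))
end

section
/- Let (R, m) be a Henselian local ring with finite residue field of cardinality q. A polynomial π(x) ∈ R[x] is a π-polynomial (i.e., π(x) = ∏_{i=1}^q (x - cᵢ) for some set of coset representatives c₁,...,c_q of m) if and only if π(x) is monic and its image in (R/m)[x] equals x^q - x. -/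
open Polynomial IsLocalRing

private lemma prod_univ_X_sub_C {K : Type*} [Field K] [Fintype K] :
    ∏ a : K, (X - C a) = X ^ Fintype.card K - X := by
  classical
  have h1 : (1 : ℕ) < Fintype.card K := Fintype.one_lt_card
  have hmon : (X ^ Fintype.card K - X : K[X]).Monic := by
    apply (monic_X_pow _).sub_of_left
    rw [degree_X, degree_X_pow]
    exact_mod_cast h1
  have hcard : Multiset.card (X ^ Fintype.card K - X : K[X]).roots
      = (X ^ Fintype.card K - X : K[X]).natDegree := by
    rw [FiniteField.roots_X_pow_card_sub_X, FiniteField.X_pow_card_sub_X_natDegree_eq K h1]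
    simp [Finset.card_univ]
  have h := prod_multiset_X_sub_C_of_monic_of_roots_card_eq hmon hcard
  rw [FiniteField.roots_X_pow_card_sub_X] at h
  rw [← h, Finset.prod_eq_multiset_prod]

private lemma monic_eq_prod_of_roots {R : Type*} [CommRing R] :
    ∀ (n : ℕ) (f : R[X]), f.Monic → f.natDegree = n →
    ∀ (c : Fin n → R), (∀ i, f.eval (c i) = 0) →
    (∀ i j, i ≠ j → IsUnit (c i - c j)) → f = ∏ i, (X - C (c i)) := by
  intro n
  induction n with
  | zero =>
    intro f hf hdeg c _ _
    simp [hf.natDegree_eq_zero.mp hdeg]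
  | succ n ih =>
    intro f hf hdeg c hroot hunit
    nontriviality R
    obtain ⟨g, hg⟩ : X - C (c 0) ∣ f := dvd_iff_isRoot.mpr (hroot 0)
    have hgm : g.Monic := (monic_X_sub_C (c 0)).of_mul_monic_left (hg ▸ hf)
    have hgdeg : g.natDegree = n := by
      have := hdeg
      rw [hg, (monic_X_sub_C (c 0)).natDegree_mul hgm, natDegree_X_sub_C] at this
      omega
    have hgroot : ∀ i : Fin n, g.eval (c i.succ) = 0 := by
      intro i
      have h0 : (c i.succ - c 0) * g.eval (c i.succ) = 0 := by
        have := hroot i.succ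
        rw [hg] at this
        simpa using this
      exact ((hunit i.succ 0 (Fin.succ_ne_zero i)).mul_right_eq_zero).mp h0
    have := ih g hgm hgdeg (fun i => c i.succ) hgroot
      (fun i j hij => hunit i.succ j.succ (fun h => hij (Fin.succ_injective n h)))
    rw [hg, this, Fin.prod_univ_succ]

theorem statement_5 {R : Type*} [CommRing R] [HenselianLocalRing R]
    (q : ℕ) [Finite (ResidueField R)] (hq : Nat.card (ResidueField R) = q)
    (π : R[X]) :
    (∃ c : Fin q → R, Function.Bijective (fun i => residue R (c i)) ∧
        π = ∏ i, (X - C (c i))) ↔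
      (π.Monic ∧ π.map (residue R) = X ^ q - X) := by
  classical
  set K := ResidueField R
  haveI : Fintype K := Fintype.ofFinite K
  have hq' : Fintype.card K = q := by rw [← Nat.card_eq_fintype_card, hq]
  have h1q : 1 < q := hq' ▸ Fintype.one_lt_card
  constructor
  · rintro ⟨c, hbij, rfl⟩
    constructor
    · exact monic_prod_of_monic _ _ fun i _ => monic_X_sub_C _
    · rw [Polynomial.map_prod]
      have : ∀ i, ((X : R[X]) - C (c i)).map (residue R) = X - C (residue R (c i)) := by
        intro i; simp
      simp_rw [this]
      rw [hbij.prod_comp (fun a => (X : K[X]) - C a), prod_univ_X_sub_C, hq']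
  · rintro ⟨hmon, hmap⟩
    have hdeg : π.natDegree = q := by
      have := hmon.natDegree_map (residue R)
      rw [hmap, FiniteField.X_pow_card_sub_X_natDegree_eq K h1q] at this
      exact this.symm
    have hroots : ∀ a : K, ∃ b : R, π.eval b = 0 ∧ residue R b = a := by
      intro a
      obtain ⟨a₀, ha₀⟩ := residue_surjective (R := R) a
      have hev : residue R (π.eval a₀) = 0 := by
        rw [← Polynomial.eval₂_at_apply, ← eval_map, hmap, ha₀]
        simp [sub_eq_zero, hq' ▸ FiniteField.pow_card a]
      have hder : IsUnit (π.derivative.eval a₀) := by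
        have hres : residue R (π.derivative.eval a₀) = -1 := by
          rw [← Polynomial.eval₂_at_apply, ← eval_map, ← derivative_map, hmap, ha₀]
          have hc : ((q : K)) = 0 := by rw [← hq']; exact Nat.cast_card_eq_zero K
          simp [derivative_X_pow, hc]
        rw [← isUnit_map_iff (residue R)] at *
        · rw [hres]; exact isUnit_one.neg
      obtain ⟨b, hb1, hb2⟩ := HenselianLocalRing.is_henselian π hmon a₀
        ((Ideal.Quotient.eq_zero_iff_mem).mp hev) hder
      refine ⟨b, hb1, ?_⟩
      have : residue R b - residue R a₀ = 0 := by
        rw [← map_sub]; exact (Ideal.Quotient.eq_zero_iff_mem).mpr hb2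
      rw [sub_eq_zero] at this
      rw [this, ha₀]
    choose r hr1 hr2 using hroots
    let e : Fin q ≃ K := (Fintype.equivFinOfCardEq hq').symm
    refine ⟨fun i => r (e i), ?_, ?_⟩
    · have : (fun i => residue R (r (e i))) = ⇑e := funext fun i => hr2 (e i)
      rw [this]; exact e.bijective
    · apply monic_eq_prod_of_roots q π hmon hdeg _ (fun i => hr1 (e i))
      intro i j hij
      have hne : residue R (r (e i) - r (e j)) ≠ 0 := by
        rw [map_sub, hr2, hr2, sub_ne_zero]
        exact fun h => hij (e.injective h)
      by_contra hcon
      have : r (e i) - r (e j) ∈ maximalIdeal R := hcon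
      exact hne ((Ideal.Quotient.eq_zero_iff_mem).mpr this)
end

section
/- If (R, m) is a Henselian local ring with finite residue field of cardinality q, then for any π-polynomial π(x) and any coset c + m of m, the image π(c + m) equals m; in particular π maps R onto m. -/
open Polynomial IsLocalRing

section
variable {R : Type*} [CommRing R] [HenselianLocalRing R]

lemma aux_mem {q : ℕ} (c : Fin q → R)
    (hc : Function.Bijective (fun i => residue R (c i))) (r : R) :
    (∏ i, (X - C (c i))).eval r ∈ maximalIdeal R := by
  obtain ⟨j, hj⟩ := hc.2 (residue R r)
  have hmem : r - c j ∈ maximalIdeal R := by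
    have : residue R (r - c j) = 0 := by
      simp only at hj
      rw [map_sub, hj, sub_self]
    rwa [← Ideal.Quotient.eq_zero_iff_mem]
  rw [eval_prod]
  have : (∏ i, ((X : R[X]) - C (c i)).eval r) = ∏ i, (r - c i) := by
    simp
  rw [this]
  exact ((Ideal.IsPrime.prod_mem_iff (hp := (maximalIdeal.isMaximal R).isPrime))).2
    ⟨j, Finset.mem_univ j, hmem⟩

lemma aux_surj {q : ℕ} (c : Fin q → R)
    (hc : Function.Bijective (fun i => residue R (c i))) (a : R) {z : R}
    (hz : z ∈ maximalIdeal R) :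
    ∃ r : R, r - a ∈ maximalIdeal R ∧ (∏ i, (X - C (c i))).eval r = z := by
  obtain ⟨j, hj⟩ := hc.2 (residue R a)
  simp only at hj
  have hq : 0 < q := j.pos
  set p : R[X] := ∏ i, (X - C (c i)) with hp
  have hpm : p.Monic := monic_prod_of_monic _ _ fun i _ => monic_X_sub_C _
  have hdeg : p.natDegree = q := by
    rw [hp, natDegree_prod_of_monic _ _ fun i _ => monic_X_sub_C _]
    simp
  set f : R[X] := p - C z with hf
  have hfm : f.Monic := hpm.sub_of_left (by
    rw [degree_eq_natDegree hpm.ne_zero, hdeg]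
    exact lt_of_le_of_lt (degree_C_le) (by exact_mod_cast hq))
  have hevalc : ∀ x : R, p.eval x = ∏ i, (x - c i) := fun x => by simp [hp, eval_prod]
  have hpj : p.eval (c j) = 0 := by
    rw [hevalc]
    exact Finset.prod_eq_zero (Finset.mem_univ j) (sub_self _)
  have h1 : f.eval (c j) ∈ maximalIdeal R := by
    have : f.eval (c j) = -z := by simp [hf, hpj]
    rw [this]
    exact (maximalIdeal R).neg_mem hz
  have hsplit : p = (X - C (c j)) * ∏ i ∈ Finset.univ.erase j, (X - C (c i)) := by
    rw [hp, ← Finset.mul_prod_erase _ _ (Finset.mem_univ j)]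
  have hderiv : f.derivative.eval (c j) = ∏ i ∈ Finset.univ.erase j, (c j - c i) := by
    rw [hf, derivative_sub, derivative_C, sub_zero, hsplit, derivative_mul]
    simp [eval_prod]
  have hunit : IsUnit (f.derivative.eval (c j)) := by
    rw [hderiv]
    by_contra h
    have hmem' : (∏ i ∈ Finset.univ.erase j, (c j - c i)) ∈ maximalIdeal R :=
      (mem_maximalIdeal _).2 (mem_nonunits_iff.2 h)
    rw [Ideal.IsPrime.prod_mem_iff (hp := (maximalIdeal.isMaximal R).isPrime)] at hmem'
    obtain ⟨i, hi, hmem⟩ := hmem'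
    have : residue R (c j) = residue R (c i) := by
      have := (Ideal.Quotient.eq_zero_iff_mem).2 hmem
      rw [map_sub, sub_eq_zero] at this
      exact this
    exact (Finset.mem_erase.1 hi).1 (hc.1 this.symm)
  obtain ⟨r, hr0, hr1⟩ := HenselianLocalRing.is_henselian f hfm (c j) h1 hunit
  refine ⟨r, ?_, ?_⟩
  · have hja : c j - a ∈ maximalIdeal R := Ideal.Quotient.eq.mp hj
    have := (maximalIdeal R).add_mem hr1 hja
    simpa using this
  · have : f.eval r = 0 := hr0
    rw [hf] at this
    simpa [sub_eq_zero] using this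

end

theorem statement_6 {R : Type*} [CommRing R] [HenselianLocalRing R]
    (q : ℕ) (c : Fin q → R) (hc : Function.Bijective (fun i => residue R (c i))) :
    (∀ a : R, (fun r => (∏ i, (X - C (c i))).eval r) '' {r : R | r - a ∈ maximalIdeal R} =
        (maximalIdeal R : Set R)) ∧
      (fun r => (∏ i, (X - C (c i))).eval r) '' Set.univ = (maximalIdeal R : Set R) := by
  constructor
  · intro a
    apply Set.eq_of_subset_of_subset
    · rintro _ ⟨r, _, rfl⟩
      exact aux_mem c hc r
    · intro z hz
      obtain ⟨r, hr, hrz⟩ := aux_surj c hc a hz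
      exact ⟨r, hr, hrz⟩
  · apply Set.eq_of_subset_of_subset
    · rintro _ ⟨r, _, rfl⟩
      exact aux_mem c hc r
    · intro z hz
      obtain ⟨r, _, hrz⟩ := aux_surj c hc 0 hz
      exact ⟨r, Set.mem_univ r, hrz⟩
end

section
/- Let (R, m) be a finite local ring. Then R is a field if and only if the ideal Z(m) of polynomials vanishing on m is principal, and in that case Z(m) = (x). -/
/-!
If `𝔪 = 0`, then `Z(𝔪)` consists of the polynomials without constant term, so `Z(𝔪) = (X)`.
Conversely, suppose `Z(𝔪) = (g)`. Since `𝔪` is nilpotent, `X ^ N ∈ Z(𝔪)`, so `g ∣ X ^ N` and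
the reduction of `g` modulo `𝔪` is `c X ^ d` with `c ≠ 0`: the `d`-th coefficient of `g` is a unit
and all the others lie in `𝔪`. As `g(0) = 0`, `d ≥ 1`. If `d = 1`, then `g = X h` with `h` a unit
of `R[X]`, so `X ∈ Z(𝔪)` and `𝔪 = 0`. If `d ≥ 2`, take `t ≠ 0` with `t 𝔪 = 0`; then `t X ∈ Z(𝔪)`,
say `t X = g q`. The coefficients of `g q` of degree `≥ d` vanish, and as the `d`-th coefficient of
`g` is a unit while the others lie in `𝔪`, induction shows all coefficients of `q` lie in every
power of `𝔪`; so `q = 0`, hence `t = 0`, a contradiction.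
-/

open Polynomial IsLocalRing

section zeroFunctions

variable {R : Type*} [CommRing R]

theorem zeroFunctions_singleton_zero : zeroFunctions ({0} : Set R) = Ideal.span {X} := by
  ext f
  simp [mem_zeroFunctions, Ideal.mem_span_singleton, X_dvd_iff, coeff_zero_eq_eval_zero]

theorem X_mem_zeroFunctions_iff {S : Set R} : X ∈ zeroFunctions S ↔ S ⊆ {0} := by
  simp [mem_zeroFunctions, Set.subset_def]

theorem X_pow_mem_zeroFunctions {I : Ideal R} {n : ℕ} (hI : I ^ n = ⊥) :
    X ^ n ∈ zeroFunctions (I : Set R) := fun s hs => by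
  simpa [hI] using Ideal.pow_mem_pow hs n

theorem C_mul_X_mem_zeroFunctions {S : Set R} {t : R} (ht : ∀ s ∈ S, t * s = 0) :
    C t * X ∈ zeroFunctions S := fun s hs => by
  simpa using ht s hs

end zeroFunctions

theorem Ideal.exists_ne_zero_forall_mul_eq_zero_of_isNilpotent {R : Type*} [CommRing R]
    [Nontrivial R] {I : Ideal R} (hI : IsNilpotent I) : ∃ t ≠ 0, ∀ s ∈ I, t * s = 0 := by
  obtain ⟨n, hn⟩ := hI
  induction n with
  | zero => simp [Ideal.one_eq_top] at hn
  | succ n ih =>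
    by_cases hbot : I ^ n = ⊥
    · exact ih hbot
    obtain ⟨t, ht, ht0⟩ := (Submodule.ne_bot_iff _).mp hbot
    refine ⟨t, ht0, fun s hs => ?_⟩
    simpa [← pow_succ, hn] using Ideal.mul_mem_mul ht hs

theorem Polynomial.exists_isUnit_coeff_of_dvd_X_pow {R : Type*} [CommRing R] [IsLocalRing R]
    {g : R[X]} {n : ℕ} (hg : g ∣ X ^ n) :
    ∃ d, IsUnit (g.coeff d) ∧ ∀ i ≠ d, g.coeff i ∈ maximalIdeal R := by
  have hmap : g.map (residue R) ∣ X ^ n := by simpa using Polynomial.map_dvd (residue R) hg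
  obtain ⟨d, -, hassoc⟩ := (dvd_prime_pow prime_X n).mp hmap
  obtain ⟨u, hu⟩ := hassoc.symm
  obtain ⟨c, hc, hcu⟩ := Polynomial.isUnit_iff.mp u.isUnit
  have hcoeff : ∀ i, residue R (g.coeff i) = if i = d then c else 0 := fun i => by
    rw [← coeff_map, ← hu, ← hcu, mul_comm, coeff_C_mul_X_pow]
  refine ⟨d, ?_, fun i hi => ?_⟩
  · rw [← residue_ne_zero_iff_isUnit, hcoeff, if_pos rfl]
    exact hc.ne_zero
  · rw [← residue_eq_zero_iff, hcoeff, if_neg hi]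

theorem Polynomial.eq_zero_of_coeff_mul_eq_zero {R : Type*} [CommRing R] {I : Ideal R}
    (hI : IsNilpotent I) {g q : R[X]} {d : ℕ} (hd : IsUnit (g.coeff d))
    (hg : ∀ i ≠ d, g.coeff i ∈ I) (hgq : ∀ j ≥ d, (g * q).coeff j = 0) : q = 0 := by
  have hq : ∀ n i, q.coeff i ∈ I ^ n := by
    intro n
    induction n with
    | zero => simp [Ideal.one_eq_top]
    | succ n ih =>
      intro i
      have hdi : (d, i) ∈ Finset.HasAntidiagonal.antidiagonal (d + i) := by simp
      have hsum := hgq (d + i) (Nat.le_add_right d i)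
      rw [coeff_mul, ← Finset.add_sum_erase _ _ hdi] at hsum
      rw [← Ideal.unit_mul_mem_iff_mem _ hd, eq_neg_of_add_eq_zero_left hsum]
      refine neg_mem (Ideal.sum_mem _ fun x hx => ?_)
      have hx_sum := Finset.HasAntidiagonal.mem_antidiagonal.mp (Finset.mem_of_mem_erase hx)
      have hxd : x.1 ≠ d := fun h => Finset.ne_of_mem_erase hx (Prod.ext h (by omega))
      simpa [pow_succ'] using Ideal.mul_mem_mul (hg x.1 hxd) (ih x.2)
  obtain ⟨N, hN⟩ := hI
  ext i
  simpa [hN] using hq N i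

theorem IsLocalRing.maximalIdeal_eq_bot_of_isPrincipal_zeroFunctions {R : Type*} [CommRing R]
    [Finite R] [IsLocalRing R] (h : (zeroFunctions (maximalIdeal R : Set R)).IsPrincipal) :
    maximalIdeal R = ⊥ := by
  obtain ⟨g, hg⟩ := h.principal
  rw [Ideal.submodule_span_eq] at hg
  have hmem : ∀ {f : R[X]}, f ∈ zeroFunctions (maximalIdeal R : Set R) → g ∣ f := fun hf => by
    rwa [hg, Ideal.mem_span_singleton] at hf
  obtain ⟨N, hN⟩ : IsNilpotent (maximalIdeal R) :=
    (isArtinianRing_iff_isNilpotent_maximalIdeal R).mp inferInstance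
  obtain ⟨d, hd, hgm⟩ := exists_isUnit_coeff_of_dvd_X_pow (hmem (X_pow_mem_zeroFunctions hN))
  have hg0 : g.coeff 0 = 0 := by
    have hgZ : g ∈ zeroFunctions (maximalIdeal R : Set R) := hg ▸ Ideal.mem_span_singleton_self g
    rw [coeff_zero_eq_eval_zero]
    exact mem_zeroFunctions.mp hgZ 0 (zero_mem _)
  have hd0 : d ≠ 0 := by
    rintro rfl
    exact not_isUnit_zero (hg0 ▸ hd)
  rcases Nat.lt_or_ge d 2 with hd1 | hd2
  · obtain rfl : d = 1 := by omega
    have hunit : IsUnit g.divX := by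
      refine isUnit_iff_coeff_isUnit_isNilpotent.mpr
        ⟨by simpa [coeff_divX] using hd, fun i hi => ?_⟩
      rw [coeff_divX]
      exact ⟨N, by simpa [hN] using Ideal.pow_mem_pow (hgm _ (by omega)) N⟩
    have hX : zeroFunctions (maximalIdeal R : Set R) = Ideal.span {X} := by
      rw [hg, ← X_mul_divX_add g, hg0, C_0, add_zero, Ideal.span_singleton_mul_right_unit hunit]
    exact (Submodule.eq_bot_iff _).mpr
      (X_mem_zeroFunctions_iff.mp (hX ▸ Ideal.mem_span_singleton_self X))
  · exfalso
    obtain ⟨t, ht0, ht⟩ := Ideal.exists_ne_zero_forall_mul_eq_zero_of_isNilpotent ⟨N, hN⟩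
    obtain ⟨q, hq⟩ := hmem (C_mul_X_mem_zeroFunctions ht)
    have hq0 : q = 0 := eq_zero_of_coeff_mul_eq_zero ⟨N, hN⟩ hd hgm fun j hj => by
      rw [← hq, coeff_C_mul_X]
      exact if_neg (by omega)
    apply ht0
    simpa [hq0] using congrArg (coeff · 1) hq

theorem statement_8 {R : Type*} [CommRing R] [Finite R] [IsLocalRing R] :
    (IsField R ↔ (zeroFunctions (maximalIdeal R : Set R)).IsPrincipal) ∧
      ((zeroFunctions (maximalIdeal R : Set R)).IsPrincipal →
        zeroFunctions (maximalIdeal R : Set R) = Ideal.span {(X : R[X])}) := by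
  have hspan : maximalIdeal R = ⊥ → zeroFunctions (maximalIdeal R : Set R) = Ideal.span {X} :=
    fun h => by rw [h, Submodule.bot_coe, zeroFunctions_singleton_zero]
  refine ⟨⟨fun hF => ⟨X, hspan (isField_iff_maximalIdeal_eq.mp hF)⟩, fun hP => ?_⟩, fun hP => ?_⟩
  · exact isField_iff_maximalIdeal_eq.mpr (maximalIdeal_eq_bot_of_isPrincipal_zeroFunctions hP)
  · exact hspan (maximalIdeal_eq_bot_of_isPrincipal_zeroFunctions hP)
end

section
/- Let (R, m) be a finite local ring and π(x) a π-polynomial. If Z(R) = (π(x)) as an ideal of R[x], then m = 0, i.e., R is a field. -/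
open Polynomial IsLocalRing

theorem statement_9 {R : Type*} [CommRing R] [Finite R] [IsLocalRing R]
    (q : ℕ) (c : Fin q → R) (hc : Function.Bijective (fun i => residue R (c i)))
    (h : zeroFunctions (Set.univ : Set R) = Ideal.span {∏ i, (X - C (c i))}) :
    maximalIdeal R = ⊥ := by
  have hπ : (∏ i, (X - C (c i))) ∈ zeroFunctions (Set.univ : Set R) := by
    rw [h]; exact Ideal.mem_span_singleton_self _
  have hzero : ∀ r : R, ∏ i, (r - c i) = 0 := by
    intro r
    have := hπ r (Set.mem_univ r)
    simpa [eval_prod, Ideal.mem_bot] using this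
  refine le_antisymm (fun t ht => ?_) bot_le
  rw [Ideal.mem_bot]
  rcases isEmpty_or_nonempty (Fin q) with hq | hq
  · have h1 : (1 : R) = 0 := by simpa using hzero 0
    calc t = t * 1 := (mul_one t).symm
      _ = 0 := by rw [h1, mul_zero]
  · obtain ⟨i0⟩ := hq
    have h0 := hzero (c i0 + t)
    rw [← Finset.mul_prod_erase Finset.univ _ (Finset.mem_univ i0)] at h0
    have ht0 : c i0 + t - c i0 = t := by ring
    rw [ht0] at h0
    have hu : IsUnit (∏ i ∈ Finset.univ.erase i0, (c i0 + t - c i)) := by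
      refine Finset.prod_induction _ _ (fun a b => IsUnit.mul) isUnit_one ?_
      intro i hi
      have hne : i ≠ i0 := (Finset.mem_erase.mp hi).1
      rw [← IsLocalRing.notMem_maximalIdeal]
      intro hmem
      have hres : residue R (c i0 + t - c i) = 0 :=
        (Ideal.Quotient.eq_zero_iff_mem).mpr hmem
      have htres : residue R t = 0 := (Ideal.Quotient.eq_zero_iff_mem).mpr ht
      rw [map_sub, map_add, htres, add_zero, sub_eq_zero] at hres
      exact hne (hc.injective hres.symm)
    exact (hu.mul_left_eq_zero).mp h0
end

section
/- Let (R, m) be a Noetherian local ring. The ideal Z(R) of polynomials vanishing on all of R contains a nonzero polynomial if and only if depth R = 0 and the residue field R/m is finite. -/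
/-!
If `a ∈ 𝔪` is a nonzerodivisor, the powers `aⁱ` differ pairwise by the nonzerodivisors
`aⁱ (1 - a^(j-i))`; if `R/𝔪` is infinite, lifts of distinct residues differ by units. A polynomial
vanishing at more points than its degree, with pairwise differences nonzerodivisors, is zero:
peel off the linear factors `X - a` one at a time.

Conversely, if `𝔪` consists of zerodivisors, prime avoidance over the finitely many associated
primes of the Noetherian ring `R` gives some `c ≠ 0` with `c 𝔪 = 0`. If `R/𝔪` is finite,
`c ∏ (X - rᵢ)`, with `rᵢ` running over representatives of `R/𝔪`, vanishes on `R`: every `r` is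
congruent mod `𝔪` to some `rᵢ`.
-/

open Polynomial IsLocalRing

open Finset in
lemma Polynomial.eq_zero_of_natDegree_lt_card_of_eval_eq_zero_of_pairwise_sub_mem_nonZeroDivisors
    {R : Type*} [CommRing R] (p : R[X]) (s : Finset R)
    (hs : (s : Set R).Pairwise fun a b => a - b ∈ nonZeroDivisors R)
    (heval : ∀ x ∈ s, p.eval x = 0) (hcard : p.natDegree < #s) : p = 0 := by
  classical
  nontriviality R
  induction s using Finset.induction_on generalizing p with
  | empty => simp at hcard
  | insert a s ha ih =>
    obtain ⟨q, rfl⟩ := dvd_iff_isRoot.mpr (heval a (mem_insert_self a s))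
    suffices q = 0 by rw [this, mul_zero]
    by_contra hq
    refine hq (ih q (hs.mono (by simp)) (fun x hx => ?_) ?_)
    · have hxa : x - a ∈ nonZeroDivisors R :=
        hs (by simp [hx]) (by simp) (by rintro rfl; exact ha hx)
      have hx := heval x (mem_insert_of_mem hx)
      rwa [eval_mul, eval_sub, eval_X, eval_C, mul_left_mem_nonZeroDivisors_eq_zero_iff hxa] at hx
    · rw [card_insert_of_notMem ha, (monic_X_sub_C a).natDegree_mul' hq, natDegree_X_sub_C] at hcard
      omega

open Finset in
lemma Polynomial.eq_zero_of_eval_eq_zero_of_pairwise_sub_mem_nonZeroDivisors {R : Type*}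
    [CommRing R] [Nontrivial R] (p : R[X]) {v : ℕ → R}
    (hv : Pairwise fun i j => v i - v j ∈ nonZeroDivisors R) (heval : ∀ i, p.eval (v i) = 0) :
    p = 0 := by
  classical
  have hinj : v.Injective := fun i j hvij => by
    by_contra hij
    exact nonZeroDivisors.ne_zero (hv hij) (sub_eq_zero.mpr hvij)
  refine p.eq_zero_of_natDegree_lt_card_of_eval_eq_zero_of_pairwise_sub_mem_nonZeroDivisors
    ((range (p.natDegree + 1)).image v) ?_ (by simp [heval]) ?_
  · rw [coe_image]
    rintro _ ⟨i, -, rfl⟩ _ ⟨j, -, rfl⟩ hvij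
    exact hv (hinj.ne_iff.mp hvij)
  · rw [card_image_of_injective _ hinj, card_range]
    omega

lemma mem_zeroFunctions_iff {R : Type*} [CommRing R] {S : Set R} {f : R[X]} :
    f ∈ zeroFunctions S ↔ ∀ s ∈ S, f.eval s = 0 :=
  forall₂_congr fun _ _ => Ideal.mem_bot

lemma zeroFunctions_eq_bot_of_pairwise_sub_mem_nonZeroDivisors {R : Type*} [CommRing R]
    [Nontrivial R] {v : ℕ → R} (hv : Pairwise fun i j => v i - v j ∈ nonZeroDivisors R) :
    zeroFunctions (Set.univ : Set R) = ⊥ :=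
  eq_bot_iff.mpr fun p hp => Ideal.mem_bot.mpr <|
    p.eq_zero_of_eval_eq_zero_of_pairwise_sub_mem_nonZeroDivisors hv fun _ =>
      mem_zeroFunctions_iff.mp hp _ trivial

namespace IsLocalRing

variable {R : Type*} [CommRing R] [IsLocalRing R]

lemma pow_sub_pow_mem_nonZeroDivisors {a : R} (ha : a ∈ maximalIdeal R)
    (ha' : a ∈ nonZeroDivisors R) {i j : ℕ} (hij : i < j) : a ^ i - a ^ j ∈ nonZeroDivisors R := by
  have hu : IsUnit (1 - a ^ (j - i)) :=
    isUnit_one_sub_self_of_mem_nonunits _ (Ideal.pow_mem_of_mem _ ha _ (by omega))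
  rw [show a ^ i - a ^ j = a ^ i * (1 - a ^ (j - i)) by
    rw [mul_sub, mul_one, ← pow_add, Nat.add_sub_cancel' hij.le]]
  exact mul_mem (pow_mem ha' i) hu.mem_nonZeroDivisors

lemma zeroFunctions_univ_eq_bot_of_mem_nonZeroDivisors {a : R} (ha : a ∈ maximalIdeal R)
    (ha' : a ∈ nonZeroDivisors R) : zeroFunctions (Set.univ : Set R) = ⊥ := by
  refine zeroFunctions_eq_bot_of_pairwise_sub_mem_nonZeroDivisors (v := (a ^ ·)) fun i j hij => ?_
  rcases hij.lt_or_gt with hlt | hgt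
  · exact pow_sub_pow_mem_nonZeroDivisors ha ha' hlt
  · rw [← neg_sub, neg_eq_neg_one_mul]
    exact mul_mem isUnit_one.neg.mem_nonZeroDivisors (pow_sub_pow_mem_nonZeroDivisors ha ha' hgt)

lemma zeroFunctions_univ_eq_bot_of_infinite [Infinite (ResidueField R)] :
    zeroFunctions (Set.univ : Set R) = ⊥ := by
  let e := Infinite.natEmbedding (ResidueField R)
  have hsurj := residue_surjective (R := R)
  refine zeroFunctions_eq_bot_of_pairwise_sub_mem_nonZeroDivisors
    (v := fun i => Function.surjInv hsurj (e i)) fun i j hij => ?_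
  refine (notMem_maximalIdeal.mp fun hmem => hij (e.injective ?_)).mem_nonZeroDivisors
  rwa [← residue_eq_zero_iff, map_sub, Function.surjInv_eq hsurj, Function.surjInv_eq hsurj,
    sub_eq_zero] at hmem

end IsLocalRing

lemma prod_X_sub_C_out_mem_zeroFunctionsInto {R : Type*} [CommRing R] (I : Ideal R)
    [Fintype (R ⧸ I)] : ∏ y : R ⧸ I, (X - C y.out) ∈ zeroFunctionsInto Set.univ I := by
  intro r _
  rw [eval_prod, ← Ideal.Quotient.eq_zero_iff_mem, map_prod]
  exact Finset.prod_eq_zero (Finset.mem_univ (Ideal.Quotient.mk I r)) (by simp)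

lemma C_mul_mem_zeroFunctions_of_mem_annihilator {R : Type*} [CommRing R] {S : Set R}
    {I : Ideal R} {c : R} (hc : c ∈ Module.annihilator R I) {g : R[X]}
    (hg : g ∈ zeroFunctionsInto S I) : C c * g ∈ zeroFunctions S :=
  mem_zeroFunctions_iff.mpr fun s hs => by
    rw [eval_mul, eval_C]
    exact congrArg Subtype.val (Module.mem_annihilator.mp hc ⟨_, hg s hs⟩)

lemma exists_ne_zero_mem_zeroFunctions_univ {R : Type*} [CommRing R] {I : Ideal R}
    [Finite (R ⧸ I)] (hI : ⊥ < Module.annihilator R I) :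
    ∃ p : R[X], p ≠ 0 ∧ p ∈ zeroFunctions (Set.univ : Set R) := by
  have := Fintype.ofFinite (R ⧸ I)
  obtain ⟨c, hc, hc0⟩ := SetLike.exists_of_lt hI
  refine ⟨C c * ∏ y : R ⧸ I, (X - C y.out), ?_,
    C_mul_mem_zeroFunctions_of_mem_annihilator hc (prod_X_sub_C_out_mem_zeroFunctionsInto I)⟩
  rw [Ne, (monic_prod_of_monic _ _ fun y _ => monic_X_sub_C _).mul_left_eq_zero_iff, C_eq_zero]
  exact fun h => hc0 (h ▸ Submodule.zero_mem _)

theorem statement_11 {R : Type*} [CommRing R] [IsNoetherianRing R] [IsLocalRing R] :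
    (∃ f : R[X], f ≠ 0 ∧ f ∈ zeroFunctions (Set.univ : Set R)) ↔
      ((∀ a ∈ maximalIdeal R, a ∉ nonZeroDivisors R) ∧ Finite (ResidueField R)) := by
  constructor
  · rintro ⟨f, hf0, hf⟩
    refine ⟨fun a ha ha' => ?_, ?_⟩
    · rw [zeroFunctions_univ_eq_bot_of_mem_nonZeroDivisors ha ha', Ideal.mem_bot] at hf
      exact hf0 hf
    · by_contra hfin
      have := not_finite_iff_infinite.mp hfin
      rw [zeroFunctions_univ_eq_bot_of_infinite, Ideal.mem_bot] at hf
      exact hf0 hf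
  · rintro ⟨hzd, hfin⟩
    have : Finite (R ⧸ maximalIdeal R) := hfin
    exact exists_ne_zero_mem_zeroFunctions_univ
      (Ideal.bot_lt_annihilator_of_disjoint_nonZeroDivisors (Set.disjoint_left.mpr hzd))
end

section
/- Let (R, m) be a Noetherian local ring. The ideal Z(R) of polynomials vanishing on R contains a regular polynomial if and only if R is a finite ring. -/
open Polynomial IsLocalRing

/-!
Let `f` be a regular polynomial vanishing on `R` and `I` its content ideal. By McCoy's theorem
`I` has zero annihilator. Modulo a prime `p` with `R ⧸ p` infinite, `f` becomes a polynomial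
vanishing on an infinite domain, so `I ≤ p`. If `Q` is the product of the finitely many minimal
primes with finite quotient, then `Q * I` lies in every minimal prime, hence in the nilradical,
which is nilpotent: `(Q * I) ^ k = 0`. As the content ideal of `f ^ k` lies in `I ^ k` and
`f ^ k` is regular, `Q ^ k = 0`; since `R ⧸ Q` is finite so is `R ⧸ Q ^ k = R`.
-/

namespace Polynomial

variable {R : Type*} [CommRing R]

theorem contentIdeal_pow_le (p : R[X]) (n : ℕ) : (p ^ n).contentIdeal ≤ p.contentIdeal ^ n := by
  induction n with
  | zero => simp
  | succ n ih =>
    rw [pow_succ, pow_succ]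
    exact (contentIdeal_mul_le_mul_contentIdeal _ _).trans (Ideal.mul_mono_left ih)

theorem eq_bot_of_mul_contentIdeal_eq_bot {f : R[X]} (hf : f ∈ nonZeroDivisors R[X]) {J : Ideal R}
    (hJ : J * f.contentIdeal = ⊥) : J = ⊥ := by
  refine (Submodule.eq_bot_iff _).mpr fun c hc => Polynomial.mem_nonZeroDivisors_iff.mp hf c ?_
  ext n
  rw [coeff_smul, smul_eq_mul, coeff_zero, ← Ideal.mem_bot, ← hJ]
  exact Ideal.mul_mem_mul hc (coeff_mem_contentIdeal (p := f) n)

theorem contentIdeal_le_of_forall_eval_mem {p : Ideal R} [p.IsPrime] [Infinite (R ⧸ p)]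
    {f : R[X]} (hf : ∀ r, f.eval r ∈ p) : f.contentIdeal ≤ p := by
  have hmap : f.map (Ideal.Quotient.mk p) = 0 := by
    refine Polynomial.funext fun x => ?_
    obtain ⟨r, rfl⟩ := Ideal.Quotient.mk_surjective x
    rw [eval_zero, eval_map, eval₂_at_apply, Ideal.Quotient.eq_zero_iff_mem]
    exact hf r
  have h := contentIdeal_map_eq_map_contentIdeal (p := f) (Ideal.Quotient.mk p)
  rw [hmap, contentIdeal_zero, eq_comm, Ideal.map_eq_bot_iff_le_ker, Ideal.mk_ker] at h
  exact h

end Polynomial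

theorem IsNoetherianRing.exists_finite_quotient_le_of_mem_minimalPrimes (R : Type*)
    [CommRing R] [IsNoetherianRing R] :
    ∃ Q : Ideal R, Finite (R ⧸ Q) ∧ ∀ p ∈ minimalPrimes R, Finite (R ⧸ p) → Q ≤ p := by
  have hfin : {p ∈ minimalPrimes R | Finite (R ⧸ p)}.Finite :=
    (minimalPrimes.finite_of_isNoetherianRing R).subset fun _ hp => hp.1
  refine ⟨∏ p ∈ hfin.toFinset, p, ?_, fun p hp hpfin => ?_⟩
  · exact Ideal.finite_quotient_prod id _ (fun _ _ => IsNoetherian.noetherian _)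
      fun p hp => ((Set.Finite.mem_toFinset hfin).mp hp).2
  · exact Ideal.prod_le_inf.trans
      (Finset.inf_le (f := id) ((Set.Finite.mem_toFinset hfin).mpr ⟨hp, hpfin⟩))

theorem finite_of_mem_nonZeroDivisors_of_forall_eval_eq_zero {R : Type*} [CommRing R]
    [IsNoetherianRing R] {f : R[X]} (hf : f ∈ nonZeroDivisors R[X]) (hzero : ∀ r, f.eval r = 0) :
    Finite R := by
  obtain ⟨Q, hQfin, hQ⟩ := IsNoetherianRing.exists_finite_quotient_le_of_mem_minimalPrimes R
  obtain ⟨k, hk⟩ := IsNoetherianRing.isNilpotent_nilradical R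
  have hQI : Q * f.contentIdeal ≤ nilradical R := by
    rw [nilradical, Ideal.zero_eq_bot, ← Ideal.sInf_minimalPrimes]
    refine le_sInf fun p hp => ?_
    have := hp.1.1
    by_cases hp_fin : Finite (R ⧸ p)
    · exact Ideal.mul_le_left.trans (hQ p hp hp_fin)
    · have := not_finite_iff_infinite.mp hp_fin
      exact Ideal.mul_le_right.trans
        (contentIdeal_le_of_forall_eval_mem fun r => (hzero r).symm ▸ p.zero_mem)
  have hQk : Q ^ k = ⊥ := by
    refine eq_bot_of_mul_contentIdeal_eq_bot (pow_mem hf k) (le_bot_iff.mp ?_)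
    calc Q ^ k * (f ^ k).contentIdeal ≤ (Q * f.contentIdeal) ^ k := by
          rw [mul_pow]; exact Ideal.mul_mono_right (contentIdeal_pow_le f k)
      _ ≤ nilradical R ^ k := Ideal.pow_right_mono hQI k
      _ = ⊥ := hk
  have := Ideal.finite_quotient_pow (IsNoetherian.noetherian Q) k
  rw [hQk] at this
  exact .of_equiv _ (RingEquiv.quotientBot R).toEquiv

theorem statement_13_general {R : Type*} [CommRing R] [IsNoetherianRing R] :
    (∃ f ∈ zeroFunctions (Set.univ : Set R), f ∈ nonZeroDivisors R[X]) ↔ Finite R := by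
  constructor
  · rintro ⟨f, hf_zero, hf⟩
    exact finite_of_mem_nonZeroDivisors_of_forall_eval_eq_zero hf
      fun r => Ideal.mem_bot.mp (hf_zero r (Set.mem_univ r))
  · intro _
    have := Fintype.ofFinite R
    refine ⟨∏ r : R, (X - C r), fun s _ => ?_, ?_⟩
    · rw [Ideal.mem_bot, eval_prod]
      exact Finset.prod_eq_zero (Finset.mem_univ s) (by rw [eval_sub, eval_X, eval_C, sub_self])
    · exact (monic_prod_of_monic _ _ fun r _ => monic_X_sub_C r).mem_nonZeroDivisors

theorem statement_13 {R : Type*} [CommRing R] [IsNoetherianRing R] [IsLocalRing R] :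
    (∃ f ∈ zeroFunctions (Set.univ : Set R), f ∈ nonZeroDivisors R[X]) ↔ Finite R :=
  statement_13_general
end

section
/- Let (R, m) be a Henselian local ring with finite residue field of cardinality q and π(x) a π-polynomial. Every f(x) ∈ Z(R) can be written as f(x) = Σ_{i=0}^{q-1} xⁱ pᵢ(π(x)) where each pᵢ(x) ∈ Z(m). -/
open Polynomial IsLocalRing

section Expansion

variable {R : Type*} [CommRing R] {q : ℕ}

lemma eq_sum_fin_X_pow_mul_C_coeff {f : R[X]} (hf : f.natDegree < q) :
    f = ∑ i : Fin q, X ^ (i : ℕ) * C (f.coeff i) := by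
  conv_lhs => rw [as_sum_range_C_mul_X_pow' f hf, ← Fin.sum_univ_eq_sum_range]
  simp only [mul_comm]

theorem exists_eq_sum_X_pow_mul_comp {π : R[X]} (hmon : π.Monic) (hdeg : π.natDegree = q)
    (hq : 0 < q) (f : R[X]) :
    ∃ p : Fin q → R[X], f = ∑ i : Fin q, X ^ (i : ℕ) * (p i).comp π := by
  induction hn : f.natDegree using Nat.strong_induction_on generalizing f with
  | _ n ih =>
  by_cases hlt : n < q
  · exact ⟨fun i => C (f.coeff i), by
      simpa only [C_comp] using eq_sum_fin_X_pow_mul_C_coeff (hn ▸ hlt)⟩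
  obtain ⟨p, hp⟩ := ih _ (by rw [natDegree_divByMonic f hmon, hdeg, hn]; omega) (f /ₘ π) rfl
  have hπ : π ≠ 1 := by rintro rfl; simp at hdeg; omega
  have hr : (f %ₘ π).natDegree < q := hdeg ▸ natDegree_modByMonic_lt f hmon hπ
  refine ⟨fun i => C ((f %ₘ π).coeff i) + X * p i, ?_⟩
  conv_lhs => rw [← modByMonic_add_div f π, hp, eq_sum_fin_X_pow_mul_C_coeff hr]
  simp only [Finset.mul_sum, ← Finset.sum_add_distrib, add_comp, C_comp, mul_comp, X_comp]
  exact Finset.sum_congr rfl fun i _ => by ring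

end Expansion

lemma RingHom.mapMatrix_vandermonde {R S : Type*} [CommRing R] [CommRing S] (φ : R →+* S)
    {n : ℕ} (v : Fin n → R) : φ.mapMatrix (Matrix.vandermonde v) = Matrix.vandermonde (φ ∘ v) := by
  ext i j
  simp [Matrix.vandermonde_apply]

section LocalRing

variable {R : Type*} [CommRing R] [IsLocalRing R] {q : ℕ}

lemma isUnit_det_vandermonde {r : Fin q → R} (hr : Function.Injective (residue R ∘ r)) :
    IsUnit (Matrix.vandermonde r).det := by
  rw [← residue_ne_zero_iff_isUnit, RingHom.map_det, RingHom.mapMatrix_vandermonde]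
  exact Matrix.det_vandermonde_ne_zero_iff.mpr hr

lemma isUnit_eval_derivative_nodal {c : Fin q → R} (hc : Function.Injective (residue R ∘ c))
    (j : Fin q) : IsUnit ((Lagrange.nodal Finset.univ c).derivative.eval (c j)) := by
  classical
  rw [Lagrange.eval_nodal_derivative_eval_node_eq (Finset.mem_univ j), Lagrange.eval_nodal,
    ← residue_ne_zero_iff_isUnit, map_prod, Finset.prod_ne_zero_iff]
  intro i hi
  rw [map_sub, sub_ne_zero]
  exact fun h => (Finset.mem_erase.mp hi).1 (hc h.symm)

lemma eval_eq_zero_of_eval_sum_X_pow_mul_comp_eq_zero {π : R[X]} {p : Fin q → R[X]} {a : R}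
    {r : Fin q → R} (hinj : Function.Injective (residue R ∘ r)) (hπr : ∀ j, π.eval (r j) = a)
    (hf : ∀ j, (∑ i : Fin q, X ^ (i : ℕ) * (p i).comp π).eval (r j) = 0) (i : Fin q) :
    (p i).eval a = 0 := by
  have hsys : (Matrix.vandermonde r).mulVec (fun i => (p i).eval a) = 0 := by
    ext j
    simpa [Matrix.mulVec, dotProduct, Matrix.vandermonde_apply, eval_finsetSum, hπr] using hf j
  have hzero := Matrix.mulVec_injective_of_isUnit
    ((Matrix.isUnit_iff_isUnit_det _).mpr (isUnit_det_vandermonde hinj))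
    (hsys.trans (Matrix.mulVec_zero _).symm)
  exact congrFun hzero i

end LocalRing

lemma HenselianLocalRing.exists_eval_eq {R : Type*} [CommRing R] [HenselianLocalRing R]
    {π : R[X]} (hmon : π.Monic) (hdeg : 0 < π.natDegree) {a c : R}
    (hc : π.eval c - a ∈ maximalIdeal R) (hu : IsUnit (π.derivative.eval c)) :
    ∃ r, π.eval r = a ∧ r - c ∈ maximalIdeal R := by
  have hmon' : (π - C a).Monic := hmon.sub_of_left (degree_C_le.trans_lt
    (natDegree_pos_iff_degree_pos.mp hdeg))
  obtain ⟨r, hr, hrc⟩ := HenselianLocalRing.is_henselian (π - C a) hmon' c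
    (by simpa using hc) (by simpa using hu)
  exact ⟨r, sub_eq_zero.mp (by simpa using hr), hrc⟩

theorem statement_15 {R : Type*} [CommRing R] [HenselianLocalRing R]
    (q : ℕ) (c : Fin q → R) (hc : Function.Bijective (fun i => residue R (c i)))
    (f : R[X]) (hf : f ∈ zeroFunctions (Set.univ : Set R)) :
    ∃ p : Fin q → R[X],
      (∀ i, p i ∈ zeroFunctions (maximalIdeal R : Set R)) ∧
      f = ∑ i : Fin q, X ^ (i : ℕ) * (p i).comp (∏ i, (X - C (c i))) := by
  have hq : 0 < q := (hc.2 0).choose.pos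
  -- `Lagrange.nodal Finset.univ c` is definitionally `∏ i, (X - C (c i))`.
  have hdeg : (Lagrange.nodal Finset.univ c).natDegree = q := by
    rw [Lagrange.natDegree_nodal, Finset.card_univ, Fintype.card_fin]
  obtain ⟨p, hp⟩ := exists_eq_sum_X_pow_mul_comp Lagrange.nodal_monic hdeg hq f
  refine ⟨p, fun i => mem_zeroFunctions_iff.mpr fun a ha => ?_, hp⟩
  have hfibre : ∀ j, ∃ r, (Lagrange.nodal Finset.univ c).eval r = a ∧ r - c j ∈ maximalIdeal R :=
    fun j => HenselianLocalRing.exists_eval_eq Lagrange.nodal_monic (hdeg.symm ▸ hq)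
      (by rw [Lagrange.eval_nodal_at_node (Finset.mem_univ j), zero_sub]; exact neg_mem ha)
      (isUnit_eval_derivative_nodal hc.1 j)
  choose r hr hrc using hfibre
  have hres : residue R ∘ r = fun j => residue R (c j) :=
    funext fun j => sub_eq_zero.mp <| by
      rw [Function.comp_apply, ← map_sub, residue_eq_zero_iff]; exact hrc j
  refine eval_eq_zero_of_eval_sum_X_pow_mul_comp_eq_zero (hres ▸ hc.1) hr (fun j => ?_) i
  rw [← hp]
  exact mem_zeroFunctions_iff.mp hf _ (Set.mem_univ _)
end

section
/- Let (R, m) be a finite local ring with principal maximal ideal m = (m₀), residue field of cardinality q, and index of nilpotency e of m. If e ≤ q, then Z(m) = (x, m₀)^e, the e-th power of the ideal of R[x] generated by x and m₀. -/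
open Polynomial IsLocalRing

theorem statement_17 {R : Type*} [CommRing R] [Finite R] [IsLocalRing R]
    (m₀ : R) (hm : maximalIdeal R = Ideal.span {m₀})
    (q : ℕ) (hq : Nat.card (ResidueField R) = q)
    (e : ℕ) (he : 1 ≤ e) (hnil : maximalIdeal R ^ e = ⊥)
    (hnil' : maximalIdeal R ^ (e - 1) ≠ ⊥) (heq : e ≤ q) :
    zeroFunctions (maximalIdeal R : Set R) = (Ideal.span {(X : R[X]), C m₀}) ^ e := by
  classical
  have hpow : ∀ n : ℕ, maximalIdeal R ^ n = Ideal.span {m₀ ^ n} := fun n => by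
    rw [hm, Ideal.span_singleton_pow]
  have hm0e : m₀ ^ e = 0 := by
    have h1 : m₀ ^ e ∈ maximalIdeal R ^ e := by
      rw [hpow]; exact Ideal.mem_span_singleton_self _
    rw [hnil] at h1; exact h1
  have hm0k : ∀ k, e ≤ k → m₀ ^ k = 0 := fun k hk => by
    rw [← Nat.sub_add_cancel hk, pow_add, hm0e, mul_zero]
  have hm0e1 : m₀ ^ (e - 1) ≠ 0 := by
    intro h
    apply hnil'
    rw [hpow, h, Ideal.span_singleton_eq_bot]
  have hm0lt : ∀ k, k < e → m₀ ^ k ≠ 0 := by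
    intro k hk h
    apply hm0e1
    have hke : k + (e - 1 - k) = e - 1 := by omega
    rw [← hke, pow_add, h, zero_mul]
  -- every nonzero element is a unit times a power of m₀
  have hdecomp : ∀ a : R, a ≠ 0 → ∃ (u : R) (j : ℕ), IsUnit u ∧ j < e ∧ a = u * m₀ ^ j := by
    intro a ha
    set P : ℕ → Prop := fun j => a ∈ Ideal.span {m₀ ^ j} with hP
    set j := Nat.findGreatest P e with hj
    have hPj : P j := Nat.findGreatest_spec (Nat.zero_le e) (by simp [hP])
    have hjle : j ≤ e := Nat.findGreatest_le e
    have hjlt : j < e := by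
      rcases lt_or_eq_of_le hjle with h | h
      · exact h
      · exfalso
        rw [h] at hPj
        simp only [hP] at hPj
        rw [hm0e, Ideal.span_singleton_eq_bot.mpr rfl, Ideal.mem_bot] at hPj
        exact ha hPj
    obtain ⟨u, hu⟩ := Ideal.mem_span_singleton.mp hPj
    refine ⟨u, j, ?_, hjlt, by rw [hu]; ring⟩
    rw [← notMem_maximalIdeal] at *
    intro humem
    have : ¬ P (j + 1) := Nat.findGreatest_is_greatest (Nat.lt_succ_self j) hjlt
    apply this
    rw [hm] at humem
    obtain ⟨s, hs⟩ := Ideal.mem_span_singleton.mp humem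
    refine Ideal.mem_span_singleton.mpr ⟨s, ?_⟩
    rw [hu, hs, pow_succ]; ring
  -- annihilator fact
  have hann : ∀ (a : R) (k : ℕ), k ≤ e → a * m₀ ^ k = 0 → a ∈ Ideal.span {m₀ ^ (e - k)} := by
    intro a k hk h
    by_cases ha : a = 0
    · rw [ha]; exact Ideal.zero_mem _
    obtain ⟨u, j, hu, hj, rfl⟩ := hdecomp a ha
    have h2 : m₀ ^ (j + k) = 0 := by
      have : u * m₀ ^ (j + k) = 0 := by rw [pow_add, ← mul_assoc]; exact h
      exact (hu.mul_right_eq_zero).mp this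
    have hjk : e ≤ j + k := by
      by_contra hlt
      exact hm0lt _ (by omega) h2
    refine Ideal.mem_span_singleton.mpr ⟨u * m₀ ^ (j - (e - k)), ?_⟩
    have hsplit : m₀ ^ j = m₀ ^ (e - k) * m₀ ^ (j - (e - k)) := by
      rw [← pow_add]
      congr 1
      omega
    rw [hsplit]; ring
  -- membership criterion in the power ideal
  set I : Ideal R[X] := Ideal.span {(X : R[X]), C m₀} with hI
  have hX : (X : R[X]) ∈ I := Ideal.subset_span (by simp)
  have hCm : (C m₀ : R[X]) ∈ I := Ideal.subset_span (by simp)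
  have hmemI : ∀ f : R[X], (∀ k, k < e → f.coeff k ∈ Ideal.span {m₀ ^ (e - k)}) → f ∈ I ^ e := by
    intro f hf
    rw [← f.sum_C_mul_X_pow_eq, Polynomial.sum]
    apply Ideal.sum_mem
    intro n _
    by_cases hn : n < e
    · obtain ⟨c, hc⟩ := Ideal.mem_span_singleton.mp (hf n hn)
      have heq2 : C (f.coeff n) * X ^ n = C c * ((C m₀) ^ (e - n) * X ^ n) := by
        rw [hc, map_mul, map_pow]; ring
      rw [heq2]
      apply Ideal.mul_mem_left
      have : (C m₀ : R[X]) ^ (e - n) * X ^ n ∈ I ^ (e - n) * I ^ n :=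
        Ideal.mul_mem_mul (Ideal.pow_mem_pow hCm _) (Ideal.pow_mem_pow hX _)
      rwa [← pow_add, Nat.sub_add_cancel (le_of_lt hn)] at this
    · push_neg at hn
      apply Ideal.mul_mem_left
      have h1 : (X : R[X]) ^ e * X ^ (n - e) ∈ I ^ e :=
        Ideal.mul_mem_right _ _ (Ideal.pow_mem_pow hX e)
      rwa [← pow_add, Nat.add_sub_cancel' hn] at h1
  -- Vandermonde points
  have hfinK : Finite (ResidueField R) := Finite.of_surjective _ residue_surjective
  have : Fintype (ResidueField R) := Fintype.ofFinite _
  obtain ⟨w⟩ : Nonempty (Fin e ↪ ResidueField R) := by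
    apply Function.Embedding.nonempty_of_card_le
    rw [Fintype.card_fin, ← Nat.card_eq_fintype_card, hq]
    exact heq
  choose v hv using fun i => residue_surjective (w i)
  have hvu : ∀ i j : Fin e, i ≠ j → IsUnit (v i - v j) := by
    intro i j hij
    rw [← notMem_maximalIdeal]
    intro hmem
    have h0 : residue R (v i - v j) = 0 := Ideal.Quotient.eq_zero_iff_mem.mpr hmem
    rw [map_sub, hv, hv, sub_eq_zero] at h0
    exact hij (w.injective h0)
  have hvand : ∀ b : Fin e → R, (∀ i, ∑ k : Fin e, b k * v i ^ (k : ℕ) = 0) → ∀ k, b k = 0 := by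
    intro b hb k
    set M := Matrix.vandermonde v with hM
    have hdet : IsUnit M.det := by
      rw [hM, Matrix.det_vandermonde]
      apply Finset.prod_induction _ IsUnit (fun _ _ => IsUnit.mul) isUnit_one
      intro i _
      apply Finset.prod_induction _ IsUnit (fun _ _ => IsUnit.mul) isUnit_one
      intro j hj
      exact hvu j i (ne_of_gt (Finset.mem_Ioi.mp hj))
    have hMb : M.mulVec b = 0 := by
      funext i
      have : M.mulVec b i = ∑ k : Fin e, b k * v i ^ (k : ℕ) := by
        simp [hM, Matrix.mulVec, Matrix.vandermonde, dotProduct, mul_comm]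
      rw [Pi.zero_apply, this, hb i]
    have h1 : M⁻¹.mulVec (M.mulVec b) = M⁻¹.mulVec 0 := by rw [hMb]
    rw [Matrix.mulVec_mulVec, Matrix.nonsing_inv_mul M hdet, Matrix.one_mulVec,
      Matrix.mulVec_zero] at h1
    exact congrFun h1 k
  apply le_antisymm
  · -- hard direction
    intro f hf
    apply hmemI
    intro k hk
    have hsum : ∀ r : R, ∑ j : Fin e, (f.coeff j * m₀ ^ (j : ℕ)) * r ^ (j : ℕ) = 0 := by
      intro r
      have hmem : r * m₀ ∈ maximalIdeal R := by
        rw [hm]; exact Ideal.mul_mem_left _ r (Ideal.mem_span_singleton_self _)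
      have h1 : f.eval (r * m₀) = 0 := by
        have := hf (r * m₀) hmem
        rwa [Ideal.mem_bot] at this
      set N := max (f.natDegree + 1) e with hN
      have hdN : f.natDegree < N := lt_of_lt_of_le (Nat.lt_succ_self _) (le_max_left _ _)
      rw [eval_eq_sum_range' hdN] at h1
      calc ∑ j : Fin e, (f.coeff j * m₀ ^ (j : ℕ)) * r ^ (j : ℕ)
          = ∑ i ∈ Finset.range e, (f.coeff i * m₀ ^ i) * r ^ i :=
            Fin.sum_univ_eq_sum_range (fun i => f.coeff i * m₀ ^ i * r ^ i) e
        _ = ∑ i ∈ Finset.range N, (f.coeff i * m₀ ^ i) * r ^ i := by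
            apply Finset.sum_subset
            · exact Finset.range_subset_range.mpr (le_max_right _ _)
            · intro i _ hie
              rw [Finset.mem_range, not_lt] at hie
              rw [hm0k i hie, mul_zero, zero_mul]
        _ = ∑ i ∈ Finset.range N, f.coeff i * (r * m₀) ^ i := by
            apply Finset.sum_congr rfl
            intro i _
            rw [mul_pow]; ring
        _ = 0 := h1
    have hb := hvand (fun j : Fin e => f.coeff j * m₀ ^ (j : ℕ)) (fun i => hsum (v i)) ⟨k, hk⟩
    exact hann _ k (le_of_lt hk) hb
  · -- easy direction
    intro f hf
    intro s hs
    rw [Ideal.mem_bot]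
    have hmap := Ideal.mem_map_of_mem (Polynomial.evalRingHom s) hf
    rw [Ideal.map_pow] at hmap
    have hle : Ideal.map (Polynomial.evalRingHom s) I ≤ maximalIdeal R := by
      rw [hI, Ideal.map_span, Ideal.span_le]
      rintro y ⟨p, hp, rfl⟩
      rcases hp with rfl | hp
      · simpa using hs
      · rw [Set.mem_singleton_iff] at hp
        subst hp
        simp only [coe_evalRingHom, eval_C]
        rw [hm]
        exact Ideal.mem_span_singleton_self _
    have hin : (Polynomial.evalRingHom s) f ∈ maximalIdeal R ^ e :=
      Ideal.pow_right_mono hle e hmap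
    rw [hnil, Ideal.mem_bot] at hin
    exact hin
end

section
/- Let (R, m) be a Noetherian local ring with finite residue field of cardinality q, and let π(x) ∈ R[x] be any polynomial whose image in (R/m)[x] is x^q - x. Define p₀(x) = x and pₙ(x) = π(p_{n-1}(x)) + p_{n-1}(x). Then for every n ≥ 1 and every r ∈ R, pₙ(r) - p_{n-1}(r) ∈ m^n. -/
open Polynomial IsLocalRing

/-- The iterates obtained by successively applying the function `x ↦ π(x) + x`. -/
noncomputable def piIterate {R : Type*} [CommRing R] (π : R[X]) : ℕ → R[X]
  | 0 => X
  | n + 1 => π.comp (piIterate π n) + piIterate π n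

/-!
Write `aₙ = pₙ(r)`, so that `aₙ₊₁ = aₙ + π(aₙ)` and the claim is `π(aₙ) ∈ mⁿ⁺¹`. Modulo `m`,
`π` is `x^q - x`, which vanishes on the residue field and has derivative `-1` there; so `π`
takes values in `m` and `1 + π'` does too. Taylor expansion then gives
`π(a + π(a)) = (1 + π'(a)) π(a) + c π(a)²`, which lies in `mᵏ⁺¹` as soon as `π(a) ∈ mᵏ`, `k ≥ 1`.
-/

section FiniteResidue

variable {R K : Type*} [CommRing R] [Field K] [Finite K]

theorem map_eval_eq_zero_of_map_eq_X_pow_card_sub_X (φ : R →+* K) {f : R[X]}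
    (hf : f.map φ = X ^ Nat.card K - X) (a : R) : φ (f.eval a) = 0 := by
  have := Fintype.ofFinite K
  rw [← eval_map_apply, hf, Nat.card_eq_fintype_card]
  simp [FiniteField.pow_card]

theorem map_one_add_eval_derivative_eq_zero_of_map_eq_X_pow_card_sub_X (φ : R →+* K)
    {f : R[X]} (hf : f.map φ = X ^ Nat.card K - X) (a : R) :
    φ (1 + f.derivative.eval a) = 0 := by
  have := Fintype.ofFinite K
  have hcard : (Nat.card K : K) = 0 := by
    rw [Nat.card_eq_fintype_card]; exact FiniteField.cast_card_eq_zero K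
  rw [map_add, ← eval_map_apply, ← derivative_map, hf, derivative_sub, derivative_X_pow, hcard]
  simp

end FiniteResidue

section Iteration

variable {R : Type*} [CommRing R]

theorem eval_add_eval_mem_pow_succ {I : Ideal R} {f : R[X]} {a : R} {k : ℕ} (hk : 1 ≤ k)
    (hder : 1 + f.derivative.eval a ∈ I) (ha : f.eval a ∈ I ^ k) :
    f.eval (a + f.eval a) ∈ I ^ (k + 1) := by
  obtain ⟨c, hc⟩ := f.binomExpansion a (f.eval a)
  have hlin : (1 + f.derivative.eval a) * f.eval a ∈ I ^ (k + 1) := by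
    rw [pow_succ']; exact Ideal.mul_mem_mul hder ha
  have hsq : f.eval a ^ 2 ∈ I ^ (k + 1) :=
    Ideal.pow_le_pow_right (show k + 1 ≤ k * 2 by omega)
      (by rw [pow_mul]; exact Ideal.pow_mem_pow ha 2)
  rw [hc, show f.eval a + f.derivative.eval a * f.eval a = (1 + f.derivative.eval a) * f.eval a
    by ring]
  exact add_mem hlin (Ideal.mul_mem_left _ c hsq)

theorem eval_piIterate_succ (π : R[X]) (n : ℕ) (r : R) :
    (piIterate π (n + 1)).eval r = (piIterate π n).eval r + π.eval ((piIterate π n).eval r) := by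
  rw [piIterate, eval_add, eval_comp, add_comm]

theorem eval_eval_piIterate_mem_pow {I : Ideal R} {π : R[X]} (hπ : ∀ a, π.eval a ∈ I)
    (hder : ∀ a, 1 + π.derivative.eval a ∈ I) (r : R) (n : ℕ) :
    π.eval ((piIterate π n).eval r) ∈ I ^ (n + 1) := by
  induction n with
  | zero => simpa [piIterate] using hπ r
  | succ n ih =>
    rw [eval_piIterate_succ]
    exact eval_add_eval_mem_pow_succ (by omega) (hder _) ih

end Iteration

theorem statement_19_general {R : Type*} [CommRing R] [IsLocalRing R]
    (q : ℕ) [Finite (ResidueField R)] (hq : Nat.card (ResidueField R) = q)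
    (π : R[X]) (hπ : π.map (residue R) = X ^ q - X) :
    ∀ n : ℕ, 1 ≤ n → ∀ r : R,
      (piIterate π n).eval r - (piIterate π (n - 1)).eval r ∈ maximalIdeal R ^ n := by
  subst hq
  have hmem (a : R) : π.eval a ∈ maximalIdeal R :=
    (residue_eq_zero_iff _).mp (map_eval_eq_zero_of_map_eq_X_pow_card_sub_X _ hπ a)
  have hder (a : R) : 1 + π.derivative.eval a ∈ maximalIdeal R :=
    (residue_eq_zero_iff _).mp
      (map_one_add_eval_derivative_eq_zero_of_map_eq_X_pow_card_sub_X _ hπ a)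
  intro n hn r
  obtain ⟨n, rfl⟩ := Nat.exists_eq_add_of_le' hn
  rw [Nat.add_sub_cancel, eval_piIterate_succ, add_sub_cancel_left]
  exact eval_eval_piIterate_mem_pow hmem hder r n

theorem statement_19 {R : Type*} [CommRing R] [IsNoetherianRing R] [IsLocalRing R]
    (q : ℕ) [Finite (ResidueField R)] (hq : Nat.card (ResidueField R) = q)
    (π : R[X]) (hπ : π.map (residue R) = X ^ q - X) :
    ∀ n : ℕ, 1 ≤ n → ∀ r : R,
      (piIterate π n).eval r - (piIterate π (n - 1)).eval r ∈ maximalIdeal R ^ n :=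
  statement_19_general q hq π hπ
end
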